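/- arXiv:2302.10265 — 4 statements merged into one kernel-verified Lean document; each statement's English description precedes it below -/
import Mathlib

section
/- If X and Y are jointly Gaussian, each standard normal, with correlation ρ, and |1 - ρ| ≤ σ²/2 for some σ ∈ (0,1), then P(XY < 0) ≤ C·σ for some absolute constant C. -/
open MeasureTheory ProbabilityTheory Real

lemma gaussPDFReal_le (x : ℝ) : gaussianPDFReal 0 1 x ≤ (Real.sqrt (2 * π))⁻¹ := by
  unfold gaussianPDFReal
  simp only [NNReal.coe_one, mul_one, sub_zero]
  have h1 : rexp (-x ^ 2 / 2) ≤ 1 := by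
    rw [Real.exp_le_one_iff]
    nlinarith [sq_nonneg x]
  have h0 : (0:ℝ) ≤ (Real.sqrt (2 * π))⁻¹ := by positivity
  calc (Real.sqrt (2 * π))⁻¹ * rexp (-x ^ 2 / 2) ≤ (Real.sqrt (2 * π))⁻¹ * 1 :=
        mul_le_mul_of_nonneg_left h1 h0
    _ = _ := mul_one _

lemma sqrt_two_pi_ge_two : (2:ℝ) ≤ Real.sqrt (2 * π) := by
  rw [Real.le_sqrt (by norm_num) (by positivity)]
  nlinarith [Real.pi_gt_three]

lemma inv_sqrt_two_pi_le : (Real.sqrt (2 * π))⁻¹ ≤ (2:ℝ)⁻¹ :=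
  inv_anti₀ (by norm_num) sqrt_two_pi_ge_two

/-- The standard gaussian measure of a small interval around 0. -/
lemma gaussian_abs_lt_le (a : ℝ) (ha : 0 ≤ a) :
    gaussianReal 0 1 {y : ℝ | |y| < a} ≤ ENNReal.ofReal a := by
  have hset : {y : ℝ | |y| < a} = Set.Ioo (-a) a := by
    ext y; simp [abs_lt]
  rw [hset, gaussianReal_apply 0 one_ne_zero]
  have hb : ∀ y : ℝ, gaussianPDF 0 1 y ≤ ENNReal.ofReal 2⁻¹ := fun y => by
    rw [gaussianPDF]
    exact ENNReal.ofReal_le_ofReal ((gaussPDFReal_le y).trans inv_sqrt_two_pi_le)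
  calc ∫⁻ y in Set.Ioo (-a) a, gaussianPDF 0 1 y
      ≤ ∫⁻ _ in Set.Ioo (-a) a, ENNReal.ofReal 2⁻¹ := lintegral_mono fun y => hb y
    _ = ENNReal.ofReal 2⁻¹ * volume (Set.Ioo (-a) a) := setLIntegral_const _ _
    _ = ENNReal.ofReal 2⁻¹ * ENNReal.ofReal (a - -a) := by rw [Real.volume_Ioo]
    _ = ENNReal.ofReal (2⁻¹ * (a - -a)) := (ENNReal.ofReal_mul (by norm_num)).symm
    _ = ENNReal.ofReal a := by ring_nf

lemma abs_le_exp_sq (x : ℝ) : |x| ≤ rexp (x ^ 2 / 4) := by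
  have h1 : |x| ≤ x ^ 2 / 4 + 1 := by nlinarith [sq_nonneg (|x| - 2), sq_abs x]
  have h2 : x ^ 2 / 4 + 1 ≤ rexp (x ^ 2 / 4) := Real.add_one_le_exp _
  linarith

/-- Bound on the first absolute moment of the standard gaussian. -/
lemma gaussian_lintegral_abs_le :
    ∫⁻ x, ENNReal.ofReal |x| ∂(gaussianReal 0 1) ≤ ENNReal.ofReal 2 := by
  rw [gaussianReal_of_var_ne_zero 0 one_ne_zero,
    lintegral_withDensity_eq_lintegral_mul _ (measurable_gaussianPDF 0 1)
      (measurable_abs.ennreal_ofReal)]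
  have hpt : ∀ x : ℝ, (gaussianPDF 0 1 * fun x => ENNReal.ofReal |x|) x
      ≤ ENNReal.ofReal ((Real.sqrt (2 * π))⁻¹ * rexp (-(4⁻¹) * x ^ 2)) := by
    intro x
    simp only [Pi.mul_apply, gaussianPDF]
    rw [← ENNReal.ofReal_mul (gaussianPDFReal_nonneg 0 1 x)]
    refine ENNReal.ofReal_le_ofReal ?_
    unfold gaussianPDFReal
    simp only [NNReal.coe_one, mul_one, sub_zero]
    have h1 : rexp (-x ^ 2 / 2) * |x| ≤ rexp (-x ^ 2 / 2) * rexp (x ^ 2 / 4) :=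
      mul_le_mul_of_nonneg_left (abs_le_exp_sq x) (Real.exp_nonneg _)
    have h2 : rexp (-x ^ 2 / 2) * rexp (x ^ 2 / 4) = rexp (-(4⁻¹) * x ^ 2) := by
      rw [← Real.exp_add]; ring_nf
    have h0 : (0:ℝ) ≤ (Real.sqrt (2 * π))⁻¹ := by positivity
    calc (Real.sqrt (2 * π))⁻¹ * rexp (-x ^ 2 / 2) * |x|
        = (Real.sqrt (2 * π))⁻¹ * (rexp (-x ^ 2 / 2) * |x|) := by ring
      _ ≤ (Real.sqrt (2 * π))⁻¹ * (rexp (-x ^ 2 / 2) * rexp (x ^ 2 / 4)) :=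
          mul_le_mul_of_nonneg_left h1 h0
      _ = (Real.sqrt (2 * π))⁻¹ * rexp (-(4⁻¹) * x ^ 2) := by rw [h2]
  have hint : Integrable (fun x : ℝ => (Real.sqrt (2 * π))⁻¹ * rexp (-(4⁻¹) * x ^ 2)) :=
    (integrable_exp_neg_mul_sq (by norm_num : (0:ℝ) < 4⁻¹)).const_mul _
  calc ∫⁻ x, (gaussianPDF 0 1 * fun x => ENNReal.ofReal |x|) x
      ≤ ∫⁻ x, ENNReal.ofReal ((Real.sqrt (2 * π))⁻¹ * rexp (-(4⁻¹) * x ^ 2)) :=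
        lintegral_mono hpt
    _ = ENNReal.ofReal (∫ x, (Real.sqrt (2 * π))⁻¹ * rexp (-(4⁻¹) * x ^ 2)) :=
        (ofReal_integral_eq_lintegral_ofReal hint
          (Filter.Eventually.of_forall fun x => by positivity)).symm
    _ ≤ ENNReal.ofReal 2 := by
        refine ENNReal.ofReal_le_ofReal ?_
        rw [MeasureTheory.integral_const_mul, integral_gaussian]
        have h1 : Real.sqrt (π / 4⁻¹) ≤ 4 := by
          have ha : Real.sqrt (π / 4⁻¹) ≤ Real.sqrt 16 :=
            Real.sqrt_le_sqrt (by rw [show π / 4⁻¹ = 4 * π from by ring]; nlinarith [Real.pi_le_four])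
          have hb : Real.sqrt 16 = 4 := by
            rw [show (16:ℝ) = 4 ^ 2 by norm_num]
            exact Real.sqrt_sq (by norm_num)
          linarith
        have h2 : (Real.sqrt (2 * π))⁻¹ ≤ 2⁻¹ := inv_sqrt_two_pi_le
        have h3 : (0:ℝ) ≤ Real.sqrt (π / 4⁻¹) := Real.sqrt_nonneg _
        have h0 : (0:ℝ) ≤ (Real.sqrt (2 * π))⁻¹ := by positivity
        nlinarith

/-- If `X, Y` are standard Gaussians with correlation `ρ` satisfying
`|1 - ρ| ≤ σ²/2` for some `σ ∈ (0,1)`, then `P(XY < 0) ≤ C σ` for an absolute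
constant `C`. The joint Gaussian structure is realized via `X = Z₁`,
`Y = ρ Z₁ + √(1-ρ²) Z₂` for independent standard Gaussians. -/
theorem prob_product_neg_le_of_close_correlation :
    ∃ C > (0:ℝ), ∀ (Ω : Type) (_ : MeasurableSpace Ω) (μ : Measure Ω),
      IsProbabilityMeasure μ →
      ∀ (Z₁ Z₂ : Ω → ℝ), Measurable Z₁ → Measurable Z₂ →
      IndepFun Z₁ Z₂ μ →
      Measure.map Z₁ μ = gaussianReal 0 1 →
      Measure.map Z₂ μ = gaussianReal 0 1 →
      ∀ (ρ σ : ℝ), |ρ| ≤ 1 → 0 < σ → σ < 1 → |1 - ρ| ≤ σ ^ 2 / 2 →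
      ∀ (X Y : Ω → ℝ), (∀ ω, X ω = Z₁ ω) →
      (∀ ω, Y ω = ρ * Z₁ ω + Real.sqrt (1 - ρ ^ 2) * Z₂ ω) →
      (μ {ω | X ω * Y ω < 0}).toReal ≤ C * σ := by
  refine ⟨4, by norm_num, ?_⟩
  intro Ω mΩ μ hμ Z₁ Z₂ hZ₁ hZ₂ hindep hmap₁ hmap₂ ρ σ hρ hσ0 hσ1 hρσ X Y hX hY
  have hρ1 : ρ ≤ 1 := (abs_le.mp hρ).2
  have hρle : 1 - ρ ≤ σ ^ 2 / 2 := (abs_le.mp hρσ).2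
  have hρhalf : (1:ℝ)/2 ≤ ρ := by nlinarith
  have hsσ : Real.sqrt (1 - ρ ^ 2) ≤ σ := by
    have h1 : 1 - ρ ^ 2 ≤ σ ^ 2 := by nlinarith
    calc Real.sqrt (1 - ρ ^ 2) ≤ Real.sqrt (σ ^ 2) := Real.sqrt_le_sqrt h1
      _ = σ := by rw [Real.sqrt_sq hσ0.le]
  have hs0 : 0 ≤ Real.sqrt (1 - ρ ^ 2) := Real.sqrt_nonneg _
  -- inclusion of events
  have hsub : {ω | X ω * Y ω < 0} ⊆ {ω | |Z₁ ω| < 2 * σ * |Z₂ ω|} := by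
    intro ω h
    simp only [Set.mem_setOf_eq] at h ⊢
    rw [hX, hY] at h
    set a := Z₁ ω with ha'
    set b := Z₂ ω with hb'
    set s := Real.sqrt (1 - ρ ^ 2) with hs'
    have ha : a ≠ 0 := by
      intro h0
      rw [h0] at h
      simp at h
    have hapos : 0 < |a| := abs_pos.mpr ha
    have hab : -( |a| * |b| ) ≤ a * b := by
      calc -(|a| * |b|) = -|a * b| := by rw [abs_mul]
        _ ≤ a * b := neg_abs_le _
    nlinarith [abs_mul_abs_self a, abs_nonneg b, abs_nonneg a,
      mul_le_mul_of_nonneg_right hsσ (mul_nonneg (abs_nonneg a) (abs_nonneg b)),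
      mul_le_mul_of_nonneg_left hab hs0]
  -- measurable set in the product
  have hT : MeasurableSet {p : ℝ × ℝ | |p.2| < 2 * σ * |p.1|} :=
    measurableSet_lt (measurable_snd.abs) ((measurable_fst.abs).const_mul _)
  have hpair : Measure.map (fun ω => (Z₂ ω, Z₁ ω)) μ
      = (gaussianReal 0 1).prod (gaussianReal 0 1) := by
    have h := (indepFun_iff_map_prod_eq_prod_map_map hZ₂.aemeasurable
      hZ₁.aemeasurable).mp hindep.symm
    rw [hmap₂, hmap₁] at h
    exact h
  have key : μ {ω | |Z₁ ω| < 2 * σ * |Z₂ ω|} ≤ ENNReal.ofReal (4 * σ) := by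
    have hpre : {ω | |Z₁ ω| < 2 * σ * |Z₂ ω|}
        = (fun ω => (Z₂ ω, Z₁ ω)) ⁻¹' {p : ℝ × ℝ | |p.2| < 2 * σ * |p.1|} := rfl
    rw [hpre, ← Measure.map_apply (hZ₂.prodMk hZ₁) hT, hpair, Measure.prod_apply hT]
    have hsec : ∀ x : ℝ, gaussianReal 0 1 (Prod.mk x ⁻¹' {p : ℝ × ℝ | |p.2| < 2 * σ * |p.1|})
        ≤ ENNReal.ofReal (2 * σ) * ENNReal.ofReal |x| := by
      intro x
      have : (Prod.mk x ⁻¹' {p : ℝ × ℝ | |p.2| < 2 * σ * |p.1|})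
          = {y : ℝ | |y| < 2 * σ * |x|} := rfl
      rw [this, ← ENNReal.ofReal_mul (by positivity)]
      exact gaussian_abs_lt_le _ (by positivity)
    calc ∫⁻ x, gaussianReal 0 1 (Prod.mk x ⁻¹' {p : ℝ × ℝ | |p.2| < 2 * σ * |p.1|})
          ∂(gaussianReal 0 1)
        ≤ ∫⁻ x, ENNReal.ofReal (2 * σ) * ENNReal.ofReal |x| ∂(gaussianReal 0 1) :=
          lintegral_mono hsec
      _ = ENNReal.ofReal (2 * σ) * ∫⁻ x, ENNReal.ofReal |x| ∂(gaussianReal 0 1) :=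
          lintegral_const_mul _ (measurable_abs.ennreal_ofReal)
      _ ≤ ENNReal.ofReal (2 * σ) * ENNReal.ofReal 2 :=
          mul_le_mul_right gaussian_lintegral_abs_le _
      _ = ENNReal.ofReal (4 * σ) := by
          rw [← ENNReal.ofReal_mul (by positivity)]
          ring_nf
  have hfin : μ {ω | X ω * Y ω < 0} ≤ ENNReal.ofReal (4 * σ) :=
    le_trans (measure_mono hsub) key
  exact ENNReal.toReal_le_of_le_ofReal (by positivity) hfin
end

section
/- Let f : ℝ² → ℝ be a C² Morse function on a compact domain D (finitely many critical points, all nondegenerate, with bounded second derivatives on D). Define κ = div(∇f/|∇f|) at regular points. Then ∫_D |κ| dvol < ∞. -/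
/-!
Pointwise `|κ| ≤ 3 ‖D(∇f)‖ / |∇f|`. At a regular point `κ` is continuous, hence integrable
nearby. At a nondegenerate critical point `p` the derivative of `∇f` is invertible, so
`|x - p| = O(|∇f x|)` and hence `|κ x| = O(|x - p|⁻¹)`, which is integrable near `p` because the
plane has dimension `2 > 1`. Integrability near every point of the compact set `D` gives
integrability on `D`.
-/

open MeasureTheory Filter Topology Set Module

section Gradient

variable {F : Type*} [NormedAddCommGroup F] [InnerProductSpace ℝ F] [CompleteSpace F]

theorem contDiffOn_gradient {f : F → ℝ} {n : WithTop ℕ∞} {s : Set F}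
    (hf : ContDiffOn ℝ (n + 1) f s) (hs : IsOpen s) : ContDiffOn ℝ n (gradient f) s :=
  let e : StrongDual ℝ F →L[ℝ] F :=
    (InnerProductSpace.toDual ℝ F).symm.toContinuousLinearEquiv.toContinuousLinearMap
  e.contDiff.comp_contDiffOn (hf.fderiv_of_isOpen hs le_rfl)

theorem measurable_gradient [MeasurableSpace F] [BorelSpace F] (f : F → ℝ) :
    Measurable (gradient f) :=
  (InnerProductSpace.toDual ℝ F).symm.continuous.measurable.comp (measurable_fderiv ℝ f)

end Gradient

theorem HasFDerivAt.isBigO_sub_rev {𝕜 E F : Type*} [NontriviallyNormedField 𝕜]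
    [NormedAddCommGroup E] [NormedSpace 𝕜 E] [NormedAddCommGroup F] [NormedSpace 𝕜 F]
    {g : E → F} {H : E ≃L[𝕜] F} {p : E} (hg : HasFDerivAt g (H : E →L[𝕜] F) p) :
    (fun x => x - p) =O[𝓝 p] fun x => g x - g p := by
  have hH := H.isBigO_sub_rev (𝓝 p) p
  refine hH.trans ((hg.isLittleO.trans_isBigO hH).right_isBigO_add.congr_right ?_)
  simp

theorem MeasureTheory.IntegrableAtFilter.of_norm_le {α E : Type*} [MeasurableSpace α]
    [NormedAddCommGroup E] {μ : Measure α} {l : Filter α} [l.IsMeasurablyGenerated] {f : α → E}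
    {g : α → ℝ}
    (hg : IntegrableAtFilter g l μ) (hf : AEStronglyMeasurable f μ)
    (hfg : ∀ᶠ x in l, ‖f x‖ ≤ g x) : IntegrableAtFilter f l μ := by
  obtain ⟨s, hsl, hs⟩ := hg
  obtain ⟨t, htl, ht, hfgt⟩ := hfg.exists_measurable_mem
  exact ⟨s ∩ t, inter_mem hsl htl, (hs.mono_set inter_subset_left).mono' hf.restrict
    (ae_restrict_of_ae_restrict_of_subset inter_subset_right
      ((ae_restrict_mem ht).mono hfgt))⟩

theorem integrableAtFilter_inv_norm_sub_nhds {E : Type*} [NormedAddCommGroup E] [NormedSpace ℝ E]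
    [FiniteDimensional ℝ E] [MeasurableSpace E] [BorelSpace E] (μ : Measure E)
    [μ.IsAddHaarMeasure] (hE : 2 ≤ finrank ℝ E) (p : E) :
    IntegrableAtFilter (fun x => ‖x - p‖⁻¹) (𝓝 p) μ := by
  have h0 : IntegrableAtFilter (fun x : E => ‖x‖⁻¹) (𝓝 0) μ := by
    refine locallyIntegrable_of_norm_le_rpow (by omega) (C := 1) (α := 1) (by exact_mod_cast hE)
      (Eventually.of_forall fun x => ?_) (by fun_prop) 0
    simp [Real.rpow_neg_one]
  have he := (Homeomorph.subRight p).measurableEmbedding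
  refine (he.integrableAtFilter_map_iff (l := 𝓝 p) (μ := μ) (f := fun x : E => ‖x‖⁻¹)).1 ?_
  simpa [Homeomorph.map_nhds_eq, map_sub_right_eq_self] using h0

theorem HasFDerivAt.integrableAtFilter_of_norm_le_div {E F G : Type*} [NormedAddCommGroup E]
    [NormedSpace ℝ E] [FiniteDimensional ℝ E] [MeasurableSpace E] [BorelSpace E] {μ : Measure E}
    [μ.IsAddHaarMeasure] (hE : 2 ≤ finrank ℝ E) [NormedAddCommGroup F] [NormedSpace ℝ F]
    [NormedAddCommGroup G] {g : E → F} {H : E ≃L[ℝ] F} {p : E}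
    (hg : HasFDerivAt g (H : E →L[ℝ] F) p) (hgp : g p = 0) {φ : E → G}
    (hφ : AEStronglyMeasurable φ μ) {M : ℝ} (hφM : ∀ᶠ x in 𝓝 p, ‖φ x‖ ≤ M / ‖g x‖) :
    IntegrableAtFilter φ (𝓝 p) μ := by
  obtain ⟨c, hc, hpg⟩ := hg.isBigO_sub_rev.exists_pos
  refine ((integrableAtFilter_inv_norm_sub_nhds μ hE p).smul (M * c)).of_norm_le hφ ?_
  filter_upwards [hpg.bound, hφM] with x hxp hx
  rw [hgp, sub_zero] at hxp
  rw [Pi.smul_apply, smul_eq_mul]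
  rcases eq_or_ne x p with rfl | hne
  · simpa [hgp] using hx
  have hxp0 : 0 < ‖x - p‖ := norm_pos_iff.2 (sub_ne_zero.2 hne)
  have hgx : 0 < ‖g x‖ := pos_of_mul_pos_right (hxp0.trans_le hxp) hc.le
  have hM : 0 ≤ M := by
    by_contra! hM
    linarith [norm_nonneg (φ x), div_neg_of_neg_of_pos hM hgx]
  calc ‖φ x‖ ≤ M / ‖g x‖ := hx
    _ = M * c / (c * ‖g x‖) := by field_simp
    _ ≤ M * c / ‖x - p‖ := by gcongr
    _ = M * c * ‖x - p‖⁻¹ := div_eq_mul_inv _ _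

section LevelCurvature

variable {n : ℕ}

/-- `κ` at a point where `∇f = v` and `D(∇f) = A`; the sum is the trace of `A`. -/
noncomputable def levelCurvature
    (A : EuclideanSpace ℝ (Fin n) →L[ℝ] EuclideanSpace ℝ (Fin n))
    (v : EuclideanSpace ℝ (Fin n)) : ℝ :=
  (‖v‖ ^ 2 * ∑ i, A (EuclideanSpace.single i 1) i - inner ℝ (A v) v) / ‖v‖ ^ 3

theorem abs_sum_apply_single_le (A : EuclideanSpace ℝ (Fin n) →L[ℝ] EuclideanSpace ℝ (Fin n)) :
    |∑ i, A (EuclideanSpace.single i 1) i| ≤ n * ‖A‖ := by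
  calc |∑ i, A (EuclideanSpace.single i 1) i|
      ≤ ∑ i, ‖A (EuclideanSpace.single i 1)‖ :=
        (Finset.abs_sum_le_sum_abs _ _).trans
          (Finset.sum_le_sum fun i _ => by
            simpa using PiLp.norm_apply_le (A (EuclideanSpace.single i 1)) i)
    _ ≤ ∑ _i : Fin n, ‖A‖ := Finset.sum_le_sum fun i _ => by
        simpa using A.le_opNorm (EuclideanSpace.single i 1)
    _ = n * ‖A‖ := by simp

theorem abs_levelCurvature_le (A : EuclideanSpace ℝ (Fin n) →L[ℝ] EuclideanSpace ℝ (Fin n))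
    (v : EuclideanSpace ℝ (Fin n)) : |levelCurvature A v| ≤ (n + 1) * ‖A‖ / ‖v‖ := by
  rcases eq_or_ne v 0 with rfl | hv
  · simp [levelCurvature]
  have hv : 0 < ‖v‖ := norm_pos_iff.2 hv
  have hinner : |inner ℝ (A v) v| ≤ ‖A‖ * ‖v‖ ^ 2 := by
    calc |inner ℝ (A v) v| ≤ ‖A v‖ * ‖v‖ := abs_real_inner_le_norm _ _
      _ ≤ ‖A‖ * ‖v‖ * ‖v‖ := by gcongr; exact A.le_opNorm v
      _ = ‖A‖ * ‖v‖ ^ 2 := by ring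
  have htr := abs_sum_apply_single_le A
  rw [levelCurvature, abs_div, abs_of_pos (pow_pos hv 3), div_le_div_iff₀ (by positivity) hv]
  calc |‖v‖ ^ 2 * ∑ i, A (EuclideanSpace.single i 1) i - inner ℝ (A v) v| * ‖v‖
      ≤ (‖v‖ ^ 2 * (n * ‖A‖) + ‖A‖ * ‖v‖ ^ 2) * ‖v‖ := by
        gcongr
        refine (abs_sub _ _).trans (add_le_add ?_ hinner)
        rw [abs_mul, abs_of_nonneg (by positivity)]
        gcongr
    _ = (n + 1) * ‖A‖ * ‖v‖ ^ 3 := by ring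

theorem ContinuousAt.levelCurvature {X : Type*} [TopologicalSpace X]
    {A : X → EuclideanSpace ℝ (Fin n) →L[ℝ] EuclideanSpace ℝ (Fin n)}
    {v : X → EuclideanSpace ℝ (Fin n)} {x : X} (hA : ContinuousAt A x) (hv : ContinuousAt v x)
    (hx : v x ≠ 0) : ContinuousAt (fun y => levelCurvature (A y) (v y)) x := by
  unfold _root_.levelCurvature
  exact ContinuousAt.div (by fun_prop) (by fun_prop) (by simpa using hx)

theorem Measurable.levelCurvature {X : Type*} [MeasurableSpace X]
    {A : X → EuclideanSpace ℝ (Fin n) →L[ℝ] EuclideanSpace ℝ (Fin n)}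
    {v : X → EuclideanSpace ℝ (Fin n)} (hA : Measurable A) (hv : Measurable v) :
    Measurable (fun y => levelCurvature (A y) (v y)) := by
  have hAvv : Measurable fun y => Inner.inner ℝ (A y (v y)) (v y) :=
    (isBoundedBilinearMap_apply.continuous.measurable.comp (hA.prodMk hv)).inner hv
  unfold _root_.levelCurvature
  fun_prop

end LevelCurvature

theorem integrableOn_curvature_of_morse_general
    (f : EuclideanSpace ℝ (Fin 2) → ℝ) (D U : Set (EuclideanSpace ℝ (Fin 2)))
    (hD : IsCompact D) (hUopen : IsOpen U) (hDU : D ⊆ U)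
    (hf : ContDiffOn ℝ 2 f U)
    (hnondeg : ∀ x ∈ D, gradient f x = 0 →
      ∃ H : EuclideanSpace ℝ (Fin 2) ≃L[ℝ] EuclideanSpace ℝ (Fin 2),
        (H : EuclideanSpace ℝ (Fin 2) →L[ℝ] EuclideanSpace ℝ (Fin 2)) =
          fderiv ℝ (fun y => gradient f y) x) :
    IntegrableOn
      (fun x =>
        (‖gradient f x‖ ^ 2 *
            (∑ i : Fin 2,
              fderiv ℝ (fun y => gradient f y) x (EuclideanSpace.single i 1) i) -
          inner ℝ (fderiv ℝ (fun y => gradient f y) x (gradient f x))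
            (gradient f x)) / ‖gradient f x‖ ^ 3)
      D volume := by
  change IntegrableOn (fun x => levelCurvature (fderiv ℝ (gradient f) x) (gradient f x)) D volume
  have hg : ContDiffOn ℝ 1 (gradient f) U := contDiffOn_gradient hf hUopen
  have hκ := (measurable_fderiv ℝ (gradient f)).levelCurvature (measurable_gradient f)
  refine LocallyIntegrableOn.integrableOn_isCompact (fun x hx => ?_) hD
  refine IntegrableAtFilter.filter_mono nhdsWithin_le_nhds ?_
  have hU : U ∈ 𝓝 x := hUopen.mem_nhds (hDU hx)
  have hA : ContinuousAt (fderiv ℝ (gradient f)) x :=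
    (hg.continuousOn_fderiv_of_isOpen hUopen le_rfl).continuousAt hU
  by_cases hx0 : gradient f x = 0
  · obtain ⟨H, hH⟩ := hnondeg x hx hx0
    have hgx : HasFDerivAt (gradient f) (H : _ →L[ℝ] _) x :=
      hH ▸ ((hg.differentiableOn one_ne_zero).differentiableAt hU).hasFDerivAt
    refine hgx.integrableAtFilter_of_norm_le_div (by simp) hx0 hκ.aestronglyMeasurable
      (M := 3 * (‖fderiv ℝ (gradient f) x‖ + 1)) ?_
    filter_upwards [hA.norm.eventually (eventually_le_nhds (lt_add_one _))] with y hy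
    refine (abs_levelCurvature_le _ _).trans ?_
    gcongr
    norm_num
  · exact (volume.finiteAt_nhds x).integrableAtFilter_of_tendsto
      hκ.aestronglyMeasurable.stronglyMeasurableAtFilter
      (hA.levelCurvature (hg.continuousOn.continuousAt hU) hx0).tendsto

/-- For a `C²` Morse function `f` on (a neighborhood of) a compact set
`D ⊂ ℝ²`, the mean curvature `κ = (|∇f|² Tr H − ∇fᵀ H ∇f)/|∇f|³` of the level
sets (defined at regular points, junk value `0` at critical points since
division by zero yields `0`) is integrable on `D`. -/
theorem integrableOn_curvature_of_morse
    (f : EuclideanSpace ℝ (Fin 2) → ℝ) (D U : Set (EuclideanSpace ℝ (Fin 2)))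
    (hD : IsCompact D) (hUopen : IsOpen U) (hDU : D ⊆ U)
    (hf : ContDiffOn ℝ 2 f U)
    (hfin : {x ∈ D | gradient f x = 0}.Finite)
    (hnondeg : ∀ x ∈ D, gradient f x = 0 →
      ∃ H : EuclideanSpace ℝ (Fin 2) ≃L[ℝ] EuclideanSpace ℝ (Fin 2),
        (H : EuclideanSpace ℝ (Fin 2) →L[ℝ] EuclideanSpace ℝ (Fin 2)) =
          fderiv ℝ (fun y => gradient f y) x) :
    IntegrableOn
      (fun x =>
        (‖gradient f x‖ ^ 2 *
            (∑ i : Fin 2,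
              fderiv ℝ (fun y => gradient f y) x (EuclideanSpace.single i 1) i) -
          inner ℝ (fderiv ℝ (fun y => gradient f y) x (gradient f x))
            (gradient f x)) / ‖gradient f x‖ ^ 3)
      D volume :=
  integrableOn_curvature_of_morse_general f D U hD hUopen hDU hf hnondeg
end

section
/- Let (X₁, X₂) and (X₃, X₄, X₅) be independent Gaussian vectors, with (X₁, X₂) centered and nondegenerate (positive-definite covariance) in ℝ², and (X₃, X₄, X₅) having all moments finite. Then for every 0 ≤ α < 1, E[ |(X₂²X₃ − 2X₁X₂X₄ + X₁²X₅)/(X₁² + X₂²)^{3/2}|^{1+α} ] < ∞. -/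
/-!
Write `S = X₁² + X₂²` and `p = 1 + α`. The numerator is a binary quadratic form in `(X₁, X₂)`
with coefficients `(X₃, X₄, X₅)`, so the integrand is at most `(2‖(X₃, X₄, X₅)‖)^p · S^(-p/2)`.
Since `(X₁, X₂) = A (Z₁, Z₂)` with `A` invertible, `S` dominates a multiple of `|Z₁| |Z₂|`, and
`|x|^(-q)` is integrable against a Gaussian for `q = p/2 < 1`: its singularity at `0` is integrable
and the density is bounded. Independence makes the product of the three dominating factors
integrable.
-/

open MeasureTheory ProbabilityTheory
open scoped NNReal Matrix Matrix.Norms.Operator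

theorem Matrix.norm_le_norm_inv_mul_norm_mulVec {n : Type*} [Fintype n] [DecidableEq n]
    (A : Matrix n n ℝ) (hA : IsUnit A.det) (z : n → ℝ) : ‖z‖ ≤ ‖A⁻¹‖ * ‖A *ᵥ z‖ :=
  calc ‖z‖ = ‖A⁻¹ *ᵥ (A *ᵥ z)‖ := by
        rw [Matrix.mulVec_mulVec, Matrix.nonsing_inv_mul A hA, Matrix.one_mulVec]
    _ ≤ ‖A⁻¹‖ * ‖A *ᵥ z‖ := Matrix.linfty_opNorm_mulVec _ _

theorem Matrix.exists_abs_mul_abs_le_sq_add_sq (A : Matrix (Fin 2) (Fin 2) ℝ) (hA : IsUnit A.det) :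
    ∃ K, ∀ z₀ z₁ : ℝ, |z₀| * |z₁| ≤
      K * ((A 0 0 * z₀ + A 0 1 * z₁) ^ 2 + (A 1 0 * z₀ + A 1 1 * z₁) ^ 2) := by
  refine ⟨‖A⁻¹‖ ^ 2, fun z₀ z₁ ↦ ?_⟩
  set x := A *ᵥ ![z₀, z₁]
  have hx : ‖x‖ ≤ Real.sqrt (x 0 ^ 2 + x 1 ^ 2) := by
    refine (pi_norm_le_iff_of_nonneg (Real.sqrt_nonneg _)).2 (Fin.forall_fin_two.2 ⟨?_, ?_⟩) <;>
      refine Real.abs_le_sqrt ?_ <;> nlinarith [sq_nonneg (x 0), sq_nonneg (x 1)]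
  have hz : ‖![z₀, z₁]‖ ≤ ‖A⁻¹‖ * Real.sqrt (x 0 ^ 2 + x 1 ^ 2) :=
    (A.norm_le_norm_inv_mul_norm_mulVec hA _).trans (by gcongr)
  have h₀ : |z₀| ≤ ‖![z₀, z₁]‖ := norm_le_pi_norm ![z₀, z₁] 0
  have h₁ : |z₁| ≤ ‖![z₀, z₁]‖ := norm_le_pi_norm ![z₀, z₁] 1
  calc |z₀| * |z₁| ≤ (‖A⁻¹‖ * Real.sqrt (x 0 ^ 2 + x 1 ^ 2)) ^ 2 := by
        rw [sq]; gcongr <;> linarith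
    _ = ‖A⁻¹‖ ^ 2 * (x 0 ^ 2 + x 1 ^ 2) := by rw [mul_pow, Real.sq_sqrt (by positivity)]
    _ = _ := by simp [x]

theorem abs_sq_mul_sub_two_mul_mul_add_sq_mul_le (x₁ x₂ : ℝ) (v : ℝ × ℝ × ℝ) :
    |x₂ ^ 2 * v.1 - 2 * x₁ * x₂ * v.2.1 + x₁ ^ 2 * v.2.2| ≤ (x₁ ^ 2 + x₂ ^ 2) * (2 * ‖v‖) := by
  have ha : |v.1| ≤ ‖v‖ := norm_fst_le v
  have hb : |v.2.1| ≤ ‖v‖ := (norm_fst_le v.2).trans (norm_snd_le v)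
  have hc : |v.2.2| ≤ ‖v‖ := (norm_snd_le v.2).trans (norm_snd_le v)
  have hx : 2 * |x₁| * |x₂| ≤ x₁ ^ 2 + x₂ ^ 2 := by
    simpa only [sq_abs] using two_mul_le_add_sq |x₁| |x₂|
  calc |x₂ ^ 2 * v.1 - 2 * x₁ * x₂ * v.2.1 + x₁ ^ 2 * v.2.2|
      ≤ x₂ ^ 2 * |v.1| + 2 * |x₁| * |x₂| * |v.2.1| + x₁ ^ 2 * |v.2.2| := by
        refine (abs_add_le _ _).trans (add_le_add ((abs_sub _ _).trans_eq ?_) ?_) <;>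
          simp [abs_mul]
    _ ≤ x₂ ^ 2 * ‖v‖ + (x₁ ^ 2 + x₂ ^ 2) * ‖v‖ + x₁ ^ 2 * ‖v‖ := by gcongr
    _ = (x₁ ^ 2 + x₂ ^ 2) * (2 * ‖v‖) := by ring

theorem abs_div_rpow_three_halves_rpow_le {N S Y p : ℝ} (hS : 0 < S) (hN : |N| ≤ S * Y)
    (hp : 0 ≤ p) : |N / S ^ ((3 : ℝ) / 2)| ^ p ≤ Y ^ p * S ^ (-(p / 2)) := by
  have hY : 0 ≤ Y := nonneg_of_mul_nonneg_right ((abs_nonneg N).trans hN) hS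
  have h : |N / S ^ ((3 : ℝ) / 2)| ≤ Y * S ^ (-(1 / 2) : ℝ) :=
    calc |N / S ^ ((3 : ℝ) / 2)| = |N| / S ^ ((3 : ℝ) / 2) := by
          rw [abs_div, abs_of_pos (Real.rpow_pos_of_pos hS _)]
      _ ≤ S * Y / S ^ ((3 : ℝ) / 2) := by gcongr
      _ = Y * S ^ (-(1 / 2) : ℝ) := by
          rw [mul_div_right_comm, ← Real.rpow_one_sub' hS.le (by norm_num)]; norm_num [mul_comm]
  calc |N / S ^ ((3 : ℝ) / 2)| ^ p ≤ (Y * S ^ (-(1 / 2) : ℝ)) ^ p := by gcongr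
    _ = Y ^ p * S ^ (-(p / 2)) := by
        rw [Real.mul_rpow hY (by positivity), ← Real.rpow_mul hS.le]; ring_nf

theorem rpow_neg_le_of_le_mul {w K S q : ℝ} (hw : 0 < w) (hS : 0 ≤ S) (h : w ≤ K * S)
    (hq : 0 ≤ q) : S ^ (-q) ≤ K ^ q * w ^ (-q) := by
  have hKS : 0 < K * S := hw.trans_le h
  have hK : 0 < K := pos_of_mul_pos_left hKS hS
  calc S ^ (-q) ≤ (w / K) ^ (-q) :=
        Real.rpow_le_rpow_of_nonpos (by positivity) (by rwa [div_le_iff₀' hK]) (by linarith)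
    _ = K ^ q * w ^ (-q) := by
        rw [Real.div_rpow hw.le hK.le, Real.rpow_neg hK.le, div_inv_eq_mul, mul_comm]

theorem curvature_rpow_le {x₁ x₂ w K p : ℝ} (v : ℝ × ℝ × ℝ) (hw : 0 < w)
    (hwK : w ≤ K * (x₁ ^ 2 + x₂ ^ 2)) (hp : 0 ≤ p) :
    |(x₂ ^ 2 * v.1 - 2 * x₁ * x₂ * v.2.1 + x₁ ^ 2 * v.2.2) / (x₁ ^ 2 + x₂ ^ 2) ^ ((3 : ℝ) / 2)| ^ p
      ≤ K ^ (p / 2) * w ^ (-(p / 2)) * (2 ^ p * ‖v‖ ^ p) := by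
  have hS : 0 < x₁ ^ 2 + x₂ ^ 2 := (by positivity : (0 : ℝ) ≤ _).lt_of_ne fun h ↦ by
    rw [← h, mul_zero] at hwK; linarith
  calc _ ≤ (2 * ‖v‖) ^ p * (x₁ ^ 2 + x₂ ^ 2) ^ (-(p / 2)) :=
        abs_div_rpow_three_halves_rpow_le hS (abs_sq_mul_sub_two_mul_mul_add_sq_mul_le x₁ x₂ v) hp
    _ ≤ (2 * ‖v‖) ^ p * (K ^ (p / 2) * w ^ (-(p / 2))) := by
        gcongr; exact rpow_neg_le_of_le_mul hw hS.le hwK (by linarith)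
    _ = _ := by rw [Real.mul_rpow zero_le_two (norm_nonneg v)]; ring

namespace ProbabilityTheory

theorem gaussianPDFReal_le (m : ℝ) (v : ℝ≥0) (x : ℝ) :
    gaussianPDFReal m v x ≤ (Real.sqrt (2 * Real.pi * v))⁻¹ := by
  rw [gaussianPDFReal_def]
  refine mul_le_of_le_one_right (by positivity) (Real.exp_le_one_iff.2 ?_)
  exact div_nonpos_of_nonpos_of_nonneg (neg_nonpos.2 (sq_nonneg _)) (by positivity)

theorem integrable_abs_rpow_neg_gaussianReal (m : ℝ) {v : ℝ≥0} (hv : v ≠ 0) {q : ℝ}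
    (hq₀ : 0 ≤ q) (hq₁ : q < 1) :
    Integrable (fun x : ℝ ↦ |x| ^ (-q)) (gaussianReal m v) := by
  rw [gaussianReal_of_var_ne_zero m hv, integrable_withDensity_iff_integrable_smul'
    (measurable_gaussianPDF m v) (ae_of_all _ fun _ ↦ gaussianPDF_lt_top)]
  simp only [toReal_gaussianPDF, smul_eq_mul]
  have hmeas : AEStronglyMeasurable (fun x : ℝ ↦ gaussianPDFReal m v x * |x| ^ (-q)) volume := by
    fun_prop
  rw [← integrableOn_univ, ← Set.union_compl_self (Metric.ball (0 : ℝ) 1), integrableOn_union]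
  constructor
  · refine integrableOn_ball_of_norm_le_rpow (C := (Real.sqrt (2 * Real.pi * v))⁻¹) (by simp)
      (by simpa using hq₁) (ae_of_all _ fun x ↦ ?_) hmeas
    rw [Real.norm_eq_abs, abs_of_nonneg (mul_nonneg (gaussianPDFReal_nonneg m v x) (by positivity)),
      Real.norm_eq_abs]
    exact mul_le_mul_of_nonneg_right (gaussianPDFReal_le m v x) (by positivity)
  · refine (integrable_gaussianPDFReal m v).integrableOn.mono' hmeas.restrict ?_
    filter_upwards [ae_restrict_mem measurableSet_ball.compl] with x hx
    have hx : 1 ≤ |x| := by simpa using hx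
    rw [Real.norm_eq_abs, abs_of_nonneg (mul_nonneg (gaussianPDFReal_nonneg m v x) (by positivity))]
    exact mul_le_of_le_one_right (gaussianPDFReal_nonneg m v x)
      (Real.rpow_le_one_of_one_le_of_nonpos hx (neg_nonpos.2 hq₀))

variable {Ω : Type*} [MeasurableSpace Ω] {μ : Measure Ω} {Z Z₁ Z₂ : Ω → ℝ} {m m₁ m₂ : ℝ}
  {v v₁ v₂ : ℝ≥0} {q : ℝ}

theorem ae_ne_of_map_eq_gaussianReal (hZ : AEMeasurable Z μ) (hlaw : μ.map Z = gaussianReal m v)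
    (hv : v ≠ 0) (c : ℝ) : ∀ᵐ ω ∂μ, Z ω ≠ c := by
  have := nullSingletonClass_gaussianReal (μ := m) hv
  exact ae_of_ae_map hZ (by rw [hlaw]; exact Measure.ae_ne _ c)

theorem integrable_abs_rpow_neg_of_map_eq_gaussianReal (hZ : AEMeasurable Z μ)
    (hlaw : μ.map Z = gaussianReal m v) (hv : v ≠ 0) (hq₀ : 0 ≤ q) (hq₁ : q < 1) :
    Integrable (fun ω ↦ |Z ω| ^ (-q)) μ := by
  have h := integrable_abs_rpow_neg_gaussianReal m hv hq₀ hq₁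
  rw [← hlaw] at h
  exact h.comp_aemeasurable hZ

theorem integrable_abs_mul_abs_rpow_neg_of_indepFun (hZ₁ : AEMeasurable Z₁ μ)
    (hZ₂ : AEMeasurable Z₂ μ) (hZ : IndepFun Z₁ Z₂ μ) (hlaw₁ : μ.map Z₁ = gaussianReal m₁ v₁)
    (hlaw₂ : μ.map Z₂ = gaussianReal m₂ v₂) (hv₁ : v₁ ≠ 0) (hv₂ : v₂ ≠ 0) (hq₀ : 0 ≤ q)
    (hq₁ : q < 1) : Integrable (fun ω ↦ (|Z₁ ω| * |Z₂ ω|) ^ (-q)) μ := by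
  simp_rw [Real.mul_rpow (abs_nonneg _) (abs_nonneg _)]
  exact (hZ.comp (φ := fun x ↦ |x| ^ (-q)) (ψ := fun x ↦ |x| ^ (-q)) (by fun_prop)
    (by fun_prop)).integrable_mul
    (integrable_abs_rpow_neg_of_map_eq_gaussianReal hZ₁ hlaw₁ hv₁ hq₀ hq₁)
    (integrable_abs_rpow_neg_of_map_eq_gaussianReal hZ₂ hlaw₂ hv₂ hq₀ hq₁)

end ProbabilityTheory

/-- If `(X₁,X₂)` is a centered nondegenerate Gaussian vector in `ℝ²`
(realized as an invertible linear image of two independent standard Gaussians),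
independent of a vector `(X₃,X₄,X₅)` with all moments finite, then the
curvature-type random variable has finite `(1+α)`-moment for `0 ≤ α < 1`. -/
theorem curvature_moment_finite
    {Ω : Type*} [MeasurableSpace Ω] (μ : Measure Ω) [IsProbabilityMeasure μ]
    (Z₁ Z₂ X₁ X₂ X₃ X₄ X₅ : Ω → ℝ)
    (hZ₁ : Measurable Z₁) (hZ₂ : Measurable Z₂)
    (hX₃ : Measurable X₃) (hX₄ : Measurable X₄) (hX₅ : Measurable X₅)
    (hZindep : IndepFun Z₁ Z₂ μ)
    (hlaw₁ : Measure.map Z₁ μ = gaussianReal 0 1)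
    (hlaw₂ : Measure.map Z₂ μ = gaussianReal 0 1)
    (A : Matrix (Fin 2) (Fin 2) ℝ) (hA : IsUnit A.det)
    (hX₁ : ∀ ω, X₁ ω = A 0 0 * Z₁ ω + A 0 1 * Z₂ ω)
    (hX₂ : ∀ ω, X₂ ω = A 1 0 * Z₁ ω + A 1 1 * Z₂ ω)
    (hindep : IndepFun (fun ω => (Z₁ ω, Z₂ ω)) (fun ω => (X₃ ω, X₄ ω, X₅ ω)) μ)
    (hmom : ∀ n : ℕ, Integrable (fun ω => ‖(X₃ ω, X₄ ω, X₅ ω)‖ ^ n) μ)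
    (α : ℝ) (hα₀ : 0 ≤ α) (hα₁ : α < 1) :
    Integrable
      (fun ω =>
        |(X₂ ω ^ 2 * X₃ ω - 2 * X₁ ω * X₂ ω * X₄ ω + X₁ ω ^ 2 * X₅ ω) /
            (X₁ ω ^ 2 + X₂ ω ^ 2) ^ ((3:ℝ)/2)| ^ (1 + α)) μ := by
  have hp : 0 ≤ 1 + α := by linarith
  obtain ⟨K, hK⟩ := A.exists_abs_mul_abs_le_sq_add_sq hA
  have hX₁m : Measurable X₁ := funext hX₁ ▸ by fun_prop
  have hX₂m : Measurable X₂ := funext hX₂ ▸ by fun_prop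
  have hZ : Integrable (fun ω ↦ (|Z₁ ω| * |Z₂ ω|) ^ (-((1 + α) / 2))) μ :=
    integrable_abs_mul_abs_rpow_neg_of_indepFun hZ₁.aemeasurable hZ₂.aemeasurable hZindep hlaw₁
      hlaw₂ one_ne_zero one_ne_zero (by linarith) (by linarith)
  have hV : Integrable (fun ω ↦ ‖(X₃ ω, X₄ ω, X₅ ω)‖ ^ (1 + α)) μ :=
    integrable_norm_rpow_of_le (by fun_prop) hp zero_le_two (by linarith)
      (by simpa only [Real.rpow_two] using hmom 2)
  have hdom := (hindep.comp (φ := fun z ↦ K ^ ((1 + α) / 2) * (|z.1| * |z.2|) ^ (-((1 + α) / 2)))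
    (ψ := fun x ↦ 2 ^ (1 + α) * ‖x‖ ^ (1 + α)) (by fun_prop) (by fun_prop)).integrable_mul
    (hZ.const_mul _) (hV.const_mul _)
  refine hdom.mono' (Measurable.aestronglyMeasurable (by fun_prop)) ?_
  filter_upwards [ae_ne_of_map_eq_gaussianReal hZ₁.aemeasurable hlaw₁ one_ne_zero 0,
    ae_ne_of_map_eq_gaussianReal hZ₂.aemeasurable hlaw₂ one_ne_zero 0] with ω h₁ h₂
  rw [Real.norm_eq_abs, abs_of_nonneg (by positivity)]
  refine curvature_rpow_le (X₃ ω, X₄ ω, X₅ ω) (by positivity) ?_ hp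
  simpa only [hX₁, hX₂] using hK (Z₁ ω) (Z₂ ω)
end

section
/- Let ψ(z) = (1/(π√(1−ρ²))) · exp(ρz/(1−ρ²)) · K₀(|z|/(1−ρ²)) for z ≠ 0, where K₀ is the modified Bessel function of the second kind and |ρ| < 1. Then ∫_ℝ ψ(z) dz = 1. -/
open MeasureTheory Real

/-- The modified Bessel function of the second kind of order `0`,
`K₀(x) = ∫_0^∞ exp(−x cosh t) dt`. -/
noncomputable def besselK0 (x : ℝ) : ℝ :=
  ∫ t in Set.Ioi (0:ℝ), Real.exp (-x * Real.cosh t)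

/-!
Writing `K₀(|z|) = ∫₀^∞ exp(-|z| cosh t) dt` and exchanging the order of integration (the
integrand is nonnegative), the `z`-integral is elementary:
`∫ exp(a z - |z| cosh t) dz = 2 cosh t / (cosh² t - a²) = 2 cosh t / (sinh² t + 1 - a²)`.
The substitution `u = sinh t` turns the remaining `t`-integral into an arctangent, so
`∫ exp(a z) K₀(|z|) dz = π / √(1 - a²)`; the theorem is the case `a = ρ` after rescaling
`z ↦ z / (1 - ρ²)`.
-/

open Set Filter Topology Function

theorem MeasureTheory.integral_integral_swap_of_nonneg {α β : Type*} [MeasurableSpace α]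
    [MeasurableSpace β] {μ : Measure α} {ν : Measure β} [SFinite μ] [SFinite ν]
    {f : α → β → ℝ} (hf : AEStronglyMeasurable (uncurry f) (μ.prod ν))
    (hf₀ : ∀ x y, 0 ≤ f x y)
    (hf_sec : ∀ᵐ y ∂ν, Integrable (fun x => f x y) μ)
    (hf_int : Integrable (fun y => ∫ x, f x y ∂μ) ν) :
    ∫ x, ∫ y, f x y ∂ν ∂μ = ∫ y, ∫ x, f x y ∂μ ∂ν := by
  refine integral_integral_swap ((integrable_prod_iff' hf).2 ⟨hf_sec, ?_⟩)
  simpa only [uncurry_apply_pair, norm_of_nonneg (hf₀ _ _)] using hf_int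

section ExpAbs

variable {a b : ℝ}

lemma eqOn_exp_mul_sub_mul_abs_Iic :
    EqOn (fun z => exp ((a + b) * z)) (fun z => exp (a * z - b * |z|)) (Iic 0) := fun z hz => by
  simp only [abs_of_nonpos (mem_Iic.1 hz)]; ring_nf

lemma eqOn_exp_mul_sub_mul_abs_Ioi :
    EqOn (fun z => exp ((a - b) * z)) (fun z => exp (a * z - b * |z|)) (Ioi 0) := fun z hz => by
  simp only [abs_of_pos (mem_Ioi.1 hz)]; ring_nf

lemma integrable_exp_mul_sub_mul_abs (h : |a| < b) :
    Integrable (fun z : ℝ => exp (a * z - b * |z|)) := by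
  obtain ⟨h₁, h₂⟩ := abs_lt.1 h
  rw [← integrableOn_univ, ← Iic_union_Ioi (a := 0), integrableOn_union]
  exact ⟨(integrableOn_exp_mul_Iic (by linarith) 0).congr_fun eqOn_exp_mul_sub_mul_abs_Iic
      measurableSet_Iic,
    (integrableOn_exp_mul_Ioi (by linarith) 0).congr_fun eqOn_exp_mul_sub_mul_abs_Ioi
      measurableSet_Ioi⟩

lemma integral_exp_mul_sub_mul_abs (h : |a| < b) :
    ∫ z : ℝ, exp (a * z - b * |z|) = 2 * b / (b ^ 2 - a ^ 2) := by
  obtain ⟨h₁, h₂⟩ := abs_lt.1 h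
  have hint := integrable_exp_mul_sub_mul_abs h
  rw [← intervalIntegral.integral_Iic_add_Ioi hint.integrableOn hint.integrableOn,
    ← setIntegral_congr_fun measurableSet_Iic eqOn_exp_mul_sub_mul_abs_Iic,
    ← setIntegral_congr_fun measurableSet_Ioi eqOn_exp_mul_sub_mul_abs_Ioi,
    integral_exp_mul_Iic (by linarith), integral_exp_mul_Ioi (by linarith)]
  simp only [mul_zero, exp_zero]
  have hab : a + b ≠ 0 := by linarith
  have hba : a - b ≠ 0 := by linarith
  have hsq : b ^ 2 - a ^ 2 ≠ 0 := by nlinarith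
  field_simp
  ring

end ExpAbs

section CoshSinh

variable {c : ℝ}

lemma hasDerivAt_arctan_sinh_div (hc : 0 < c) (t : ℝ) :
    HasDerivAt (fun t => arctan (sinh t / c) / c) (cosh t / (sinh t ^ 2 + c ^ 2)) t := by
  refine (((hasDerivAt_sinh t).div_const c).arctan.div_const c).congr_deriv ?_
  field_simp
  ring

lemma tendsto_arctan_sinh_div_atTop (hc : 0 < c) :
    Tendsto (fun t => arctan (sinh t / c) / c) atTop (𝓝 (π / 2 / c)) :=
  ((tendsto_nhds_of_tendsto_nhdsWithin tendsto_arctan_atTop).comp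
    (sinhOrderIso.tendsto_atTop.atTop_div_const hc)).div_const c

lemma integrableOn_cosh_div_sinh_sq_add_sq (hc : 0 < c) :
    IntegrableOn (fun t => cosh t / (sinh t ^ 2 + c ^ 2)) (Ioi 0) :=
  integrableOn_Ioi_deriv_of_nonneg' (fun t _ => hasDerivAt_arctan_sinh_div hc t)
    (fun t _ => by positivity) (tendsto_arctan_sinh_div_atTop hc)

lemma integral_cosh_div_sinh_sq_add_sq (hc : 0 < c) :
    ∫ t in Ioi 0, cosh t / (sinh t ^ 2 + c ^ 2) = π / (2 * c) := by
  rw [integral_Ioi_of_hasDerivAt_of_nonneg' (fun t _ => hasDerivAt_arctan_sinh_div hc t)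
    (fun t _ => by positivity) (tendsto_arctan_sinh_div_atTop hc)]
  simp only [sinh_zero, zero_div, arctan_zero, sub_zero]
  ring

end CoshSinh

lemma exp_mul_mul_besselK0_abs (a z : ℝ) :
    exp (a * z) * besselK0 |z| = ∫ t in Ioi 0, exp (a * z - cosh t * |z|) := by
  rw [besselK0, ← integral_const_mul]
  congr with t
  rw [← exp_add]
  ring_nf

lemma integral_exp_mul_mul_besselK0_abs {a : ℝ} (ha : |a| < 1) :
    ∫ z, exp (a * z) * besselK0 |z| = π / √(1 - a ^ 2) := by
  have ha₂ : 0 < 1 - a ^ 2 := sub_pos.2 ((sq_lt_one_iff_abs_lt_one a).2 ha)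
  have hc : 0 < √(1 - a ^ 2) := sqrt_pos.2 ha₂
  have hcosh : ∀ t, |a| < cosh t := fun t => ha.trans_le (one_le_cosh t)
  have inner : ∀ t, ∫ z, exp (a * z - cosh t * |z|)
      = 2 * (cosh t / (sinh t ^ 2 + √(1 - a ^ 2) ^ 2)) := fun t => by
    rw [integral_exp_mul_sub_mul_abs (hcosh t), sq_sqrt ha₂.le, cosh_sq]
    ring_nf
  simp_rw [exp_mul_mul_besselK0_abs]
  rw [integral_integral_swap_of_nonneg (by fun_prop) (fun _ _ => (exp_pos _).le)
      (ae_of_all _ fun t => integrable_exp_mul_sub_mul_abs (hcosh t))]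
  · simp_rw [inner]
    rw [integral_const_mul, integral_cosh_div_sinh_sq_add_sq hc]
    field_simp
  · simp_rw [inner]
    exact (integrableOn_cosh_div_sinh_sq_add_sq hc).const_mul 2

/-- The density `ψ(z) = (π√(1−ρ²))⁻¹ exp(ρz/(1−ρ²)) K₀(|z|/(1−ρ²))` of the
product of two standard Gaussians with correlation `ρ ∈ (−1,1)` integrates
to `1` over `ℝ`. -/
theorem integral_product_gaussian_density_eq_one
    (ρ : ℝ) (hρ₁ : -1 < ρ) (hρ₂ : ρ < 1) :
    ∫ z : ℝ,
        (1 / (π * Real.sqrt (1 - ρ ^ 2))) *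
          Real.exp (ρ * z / (1 - ρ ^ 2)) * besselK0 (|z| / (1 - ρ ^ 2)) = 1 := by
  have hs : 0 < 1 - ρ ^ 2 := by nlinarith
  calc _ = 1 / (π * √(1 - ρ ^ 2)) *
        ∫ z, (fun w => exp (ρ * w) * besselK0 |w|) (z / (1 - ρ ^ 2)) := by
        rw [← integral_const_mul]
        simp_rw [abs_div, abs_of_pos hs, mul_div_assoc, mul_assoc]
    _ = 1 / (π * √(1 - ρ ^ 2)) * ((1 - ρ ^ 2) * (π / √(1 - ρ ^ 2))) := by
        rw [Measure.integral_comp_div (fun w => exp (ρ * w) * besselK0 |w|), abs_of_pos hs,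
          smul_eq_mul, integral_exp_mul_mul_besselK0_abs (abs_lt.2 ⟨hρ₁, hρ₂⟩)]
    _ = 1 := by
        have hsqrt : 0 < √(1 - ρ ^ 2) := sqrt_pos.2 hs
        field_simp
        rw [sq_sqrt hs.le]
end
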